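/- Interleaving identity for pairings: let G be a Gauss diagram on n strings and let p, q, s ∈ {1,…,n} be pairwise distinct. Let A be the arrow diagram with a single arrow from string p to string s (tail on p, head on s), let B be the arrow diagram with a single arrow from string q to string s, and let D_1, D_2 be the two arrow diagrams each consisting of one arrow from p to s and one arrow from q to s, distinguished by the two possible linear orders of the two arrow heads along string s. Then ⟨D_1, G⟩ + ⟨D_2, G⟩ = ⟨A, G⟩ · ⟨B, G⟩. -/

import Mathlib

/-!
Combinatorial Gauss diagrams on `n` strings and the tree invariants `Z I j`.

A Gauss diagram is encoded by a finite set of arrows; each arrow records the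
string (an element of `Fin n`) and the position (a rational number, increasing
in the direction of the orientation of the string) of its tail and of its head,
together with a sign `±1`.  Only the induced combinatorial data (linear order of
the endpoints along each string, the tail/head pairing and the signs) is ever
used by the definitions below.

The tree invariant `Z I j G = ∑_{A ∈ 𝒜_{I,j}} sign(A) ⟨A, G⟩` is computed as a
signed count over all subsets `S` of the arrows of `G` that form a planar tree
diagram with leaves on `I` and trunk on `j`: each pair `(A, φ)` of a planar tree
diagram `A ∈ 𝒜_{I,j}` together with an embedding `φ : A → G` corresponds
bijectively to the subset `S = Im φ` of the arrows of `G`, which is itself a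
planar tree diagram with leaves on `I` and trunk on `j`; the contribution of the
pair to the sum is `sign(A) · sign(φ) = (-1)^{#right-pointing arrows of S} · ∏_{a ∈ S} sign(a)`.
-/

open scoped Classical

/-- An arrow of a Gauss diagram on `n` strings: a tail endpoint, a head
endpoint (each given by the string it lies on and its position along that
string) and a sign. -/
structure GArrow (n : ℕ) where
  tailStr : Fin n
  tailPos : ℚ
  headStr : Fin n
  headPos : ℚ
  sign : ℤ
deriving DecidableEq

namespace GArrow

/-- The two endpoints of an arrow: `false` is the tail, `true` is the head. -/
def ep {n : ℕ} (a : GArrow n) : Bool → Fin n × ℚ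
  | false => (a.tailStr, a.tailPos)
  | true => (a.headStr, a.headPos)

end GArrow

/-- A Gauss diagram on `n` strings: a finite set of signed arrows with all
endpoints pairwise distinct, and all signs equal to `±1`. -/
structure GaussDiagram (n : ℕ) where
  arrows : Finset (GArrow n)
  sign_pm : ∀ a ∈ arrows, a.sign = 1 ∨ a.sign = -1
  endpoints_distinct : ∀ a ∈ arrows, ∀ b ∈ arrows, ∀ s t : Bool,
    a.ep s = b.ep t → a = b ∧ s = t

/-- `S` is a tree diagram with leaves on `I` and trunk on `j`:
* the head and the tail of every arrow lie on different strings;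
* for each `i ∈ I` there is exactly one arrow tail on string `i`, and there are
  no arrow tails on strings outside `I`;
* every arrow head lies on a string of `I ∪ {j}`;
* on each string `i ∈ I` all arrow heads precede the unique arrow tail. -/
def IsTreeDiagram {n : ℕ} (I : Finset (Fin n)) (j : Fin n)
    (S : Finset (GArrow n)) : Prop :=
  (∀ a ∈ S, a.tailStr ≠ a.headStr) ∧
  (∀ i ∈ I, ∃! a, a ∈ S ∧ a.tailStr = i) ∧
  (∀ a ∈ S, a.tailStr ∈ I) ∧
  (∀ a ∈ S, a.headStr ∈ I ∨ a.headStr = j) ∧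
  (∀ a ∈ S, ∀ b ∈ S, a.headStr = b.tailStr → a.headPos < b.tailPos)

/-- `ParentRel S s t` : string `s` is the parent of string `t` in the rooted
tree determined by the tree diagram `S`, i.e. the (unique) arrow with tail on
`t` has its head on `s`. -/
def ParentRel {n : ℕ} (S : Finset (GArrow n)) (s t : Fin n) : Prop :=
  ∃ a ∈ S, a.tailStr = t ∧ a.headStr = s

/-- `Descends S s k` : string `k` belongs to the subtree of string `s` (it is
`s` itself or an iterated child of `s`). -/
def Descends {n : ℕ} (S : Finset (GArrow n)) : Fin n → Fin n → Prop :=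
  Relation.ReflTransGen (ParentRel S)

/-- `S` is a *planar* tree diagram with leaves on `I` and trunk on `j`: the
rooted tree `T_S` determined by `S` can be drawn in the plane so that the
clockwise order of its leaves, starting from the root on string `j`, is the
order of the string numbers.  Combinatorially this says that:
* the parent relation makes the strings carrying the arrows into a tree rooted
  at `j` (every leaf string is an iterated child of `j`);
* the whole subtree hanging from an arrow lies on the same side of the string
  carrying the head of that arrow as its tail does;
* two subtrees hanging on the same side of a common string are ordered, along
  that string, compatibly with the order of the strings: for two arrow heads on
  the same string, with both tails on the left, the subtree attached closer to
  the beginning of the string is the one carrying the larger string numbers,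
  while for two tails on the right it is the one carrying the smaller string
  numbers. -/
def IsPlanarTreeDiagram {n : ℕ} (I : Finset (Fin n)) (j : Fin n)
    (S : Finset (GArrow n)) : Prop :=
  IsTreeDiagram I j S ∧
  (∀ i ∈ I, Relation.TransGen (ParentRel S) j i) ∧
  (∀ a ∈ S, ∀ k : Fin n, Descends S a.tailStr k →
    (a.tailStr < a.headStr ↔ k < a.headStr)) ∧
  (∀ a ∈ S, ∀ b ∈ S, a.headStr = b.headStr → a.headPos < b.headPos →
    ∀ k k' : Fin n, Descends S a.tailStr k → Descends S b.tailStr k' →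
      ((a.tailStr < a.headStr → b.tailStr < b.headStr → k' < k) ∧
       (a.headStr < a.tailStr → b.headStr < b.tailStr → k < k')))

/-- The sign `(-1)^q` of an (embedded) arrow diagram, where `q` is the number
of right-pointing arrows (tail on a string of smaller number than the head). -/
noncomputable def treeSign {n : ℕ} (S : Finset (GArrow n)) : ℤ :=
  (-1) ^ (S.filter fun a => a.tailStr < a.headStr).card

/-- The tree invariant `Z_{I,j}(G) = ∑_{A ∈ 𝒜_{I,j}} sign(A)·⟨A,G⟩`, computed
as the signed count of embedded planar tree diagrams with leaves on `I` and
trunk on `j` inside `G`.  In particular `Z ∅ j G = 1` (only `S = ∅`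
contributes). -/
noncomputable def Z {n : ℕ} (I : Finset (Fin n)) (j : Fin n)
    (G : GaussDiagram n) : ℤ :=
  ∑ S ∈ G.arrows.powerset,
    if IsPlanarTreeDiagram I j S then treeSign S * ∏ a ∈ S, a.sign else 0

/-- An arrow of an arrow diagram on `n` strings: the same datum as an arrow of
a Gauss diagram, but without a sign. -/
structure AArrow (n : ℕ) where
  tailStr : Fin n
  tailPos : ℚ
  headStr : Fin n
  headPos : ℚ
deriving DecidableEq

namespace AArrow

/-- The two endpoints of an arrow: `false` is the tail, `true` is the head. -/
def ep {n : ℕ} (a : AArrow n) : Bool → Fin n × ℚ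
  | false => (a.tailStr, a.tailPos)
  | true => (a.headStr, a.headPos)

end AArrow

/-- An embedding of the arrow diagram (with arrow set) `A` into the Gauss
diagram `G`: an injection of arrows sending tails to tails and heads to heads,
keeping each endpoint on the string with the same number and preserving the
linear order of the endpoints along each string. -/
def IsDiagEmbedding {n : ℕ} (A : Finset (AArrow n)) (G : GaussDiagram n)
    (f : {x // x ∈ A} → {y // y ∈ G.arrows}) : Prop :=
  Function.Injective f ∧
  (∀ x, (f x).1.tailStr = x.1.tailStr ∧ (f x).1.headStr = x.1.headStr) ∧
  (∀ (x y : {x // x ∈ A}) (s t : Bool),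
    (AArrow.ep x.1 s).1 = (AArrow.ep y.1 t).1 →
      ((AArrow.ep x.1 s).2 < (AArrow.ep y.1 t).2 ↔
        (GArrow.ep (f x).1 s).2 < (GArrow.ep (f y).1 t).2))

/-- The pairing `⟨A, G⟩ = ∑_{φ : A ↪ G} sign φ`, where the sum runs over all
embeddings of the arrow diagram `A` into the Gauss diagram `G` and `sign φ` is
the product of the signs of the arrows of `G` in the image of `φ`. -/
noncomputable def pairing {n : ℕ} (A : Finset (AArrow n)) (G : GaussDiagram n) :
    ℤ :=
  ∑ f : ({x // x ∈ A} → {y // y ∈ G.arrows}),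
    if IsDiagEmbedding A G f then ∏ x : {x // x ∈ A}, (f x).1.sign else 0

/-!
An embedding of `D₁` or `D₂` into `G` is a pair of arrows of `G`, one from `p` to `s` and one
from `q` to `s`, whose heads appear on `s` in the prescribed order. Distinct arrows of `G` have
distinct heads, so every pair counted by `⟨A, G⟩ · ⟨B, G⟩` is counted by exactly one of
`⟨D₁, G⟩`, `⟨D₂, G⟩`.
-/

lemma Finset.forall_subtype_mem_pair {α : Type*} [DecidableEq α] {a b : α}
    {P : {x // x ∈ ({a, b} : Finset α)} → Prop} :
    (∀ x, P x) ↔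
      P ⟨a, mem_insert_self a {b}⟩ ∧ P ⟨b, mem_insert_of_mem (mem_singleton_self b)⟩ := by
  refine ⟨fun h => ⟨h _, h _⟩, fun ⟨ha, hb⟩ ⟨x, hx⟩ => ?_⟩
  rcases mem_insert.1 hx with rfl | hx
  · exact ha
  · obtain rfl := mem_singleton.1 hx
    exact hb

def Finset.pairArrowEquiv {α β : Type*} [DecidableEq α] {a b : α} (hab : a ≠ b) :
    ({x // x ∈ ({a, b} : Finset α)} → β) ≃ β × β where
  toFun f := (f ⟨a, mem_insert_self a {b}⟩, f ⟨b, mem_insert_of_mem (mem_singleton_self b)⟩)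
  invFun u x := if x.1 = a then u.1 else u.2
  left_inv f := by
    funext x
    rcases mem_insert.1 x.2 with hx | hx
    · simp only [hx, if_true]
      exact congrArg f (Subtype.ext hx.symm)
    · rw [mem_singleton] at hx
      simp only [hx, hab.symm, if_false]
      exact congrArg f (Subtype.ext hx.symm)
  right_inv u := by simp [hab.symm]

lemma Finset.prod_pairArrowEquiv_symm {α β M : Type*} [DecidableEq α] [CommMonoid M]
    {a b : α} (hab : a ≠ b) (φ : β → M) (u : β × β) :
    ∏ x, φ ((pairArrowEquiv hab).symm u x) = φ u.1 * φ u.2 := by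
  change ∏ x : {x // x ∈ ({a, b} : Finset α)}, φ (if x.1 = a then u.1 else u.2) = _
  rw [prod_coe_sort {a, b} fun x => φ (if x = a then u.1 else u.2), prod_pair hab, if_pos rfl,
    if_neg hab.symm]

section

variable {n : ℕ} {G : GaussDiagram n}

lemma GaussDiagram.headPos_ne {g h : GArrow n} (hg : g ∈ G.arrows) (hh : h ∈ G.arrows)
    (hgh : g ≠ h) (hs : g.headStr = h.headStr) : g.headPos ≠ h.headPos := fun e =>
  hgh (G.endpoints_distinct g hg h hh true true (by simp [GArrow.ep, hs, e])).1

lemma isDiagEmbedding_iff_of_injOn_tailStr {A : Finset (AArrow n)}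
    {f : {x // x ∈ A} → {y // y ∈ G.arrows}}
    (hA : Set.InjOn AArrow.tailStr (A : Set (AArrow n))) :
    IsDiagEmbedding A G f ↔
      (∀ x, (f x).1.tailStr = x.1.tailStr ∧ (f x).1.headStr = x.1.headStr) ∧
      (∀ (x y : {x // x ∈ A}) (s t : Bool),
        (AArrow.ep x.1 s).1 = (AArrow.ep y.1 t).1 →
          ((AArrow.ep x.1 s).2 < (AArrow.ep y.1 t).2 ↔
            (GArrow.ep (f x).1 s).2 < (GArrow.ep (f y).1 t).2)) :=
  ⟨fun h => h.2, fun h => ⟨fun x y hxy =>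
    Subtype.ext (hA x.2 y.2 (by rw [← (h.1 x).1, ← (h.1 y).1, hxy])), h⟩⟩

lemma isDiagEmbedding_singleton_iff {a : AArrow n} (ha : a.tailStr ≠ a.headStr)
    (g : {y // y ∈ G.arrows}) :
    IsDiagEmbedding {a} G (fun _ => g) ↔ g.1.tailStr = a.tailStr ∧ g.1.headStr = a.headStr := by
  rw [isDiagEmbedding_iff_of_injOn_tailStr (by simp)]
  simp only [Unique.forall_iff, Finset.default_singleton, Bool.forall_bool, AArrow.ep, GArrow.ep,
    lt_irrefl, ha, ha.symm, iff_self, false_imp_iff, and_true]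

lemma pairing_singleton {a : AArrow n} (ha : a.tailStr ≠ a.headStr) :
    pairing {a} G = ∑ g ∈ G.arrows,
      if g.tailStr = a.tailStr ∧ g.headStr = a.headStr then g.sign else 0 := by
  rw [pairing, ← (Equiv.funUnique _ _).symm.sum_comp, ← Finset.sum_coe_sort G.arrows]
  refine Fintype.sum_congr _ _ fun g => ?_
  simp only [Equiv.funUnique_symm_apply, Fintype.prod_unique]
  exact if_congr (isDiagEmbedding_singleton_iff ha g) rfl rfl

lemma isDiagEmbedding_pair_iff {p q s : Fin n} (hpq : p ≠ q) (hps : p ≠ s) (hqs : q ≠ s)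
    {t₁ t₂ ρ₁ ρ₂ : ℚ} (hρ : ρ₁ < ρ₂) (g h : {y // y ∈ G.arrows}) :
    IsDiagEmbedding {⟨p, t₁, s, ρ₁⟩, ⟨q, t₂, s, ρ₂⟩} G
        (fun x => if x.1 = ⟨p, t₁, s, ρ₁⟩ then g else h) ↔
      (g.1.tailStr = p ∧ g.1.headStr = s) ∧ (h.1.tailStr = q ∧ h.1.headStr = s) ∧
        g.1.headPos < h.1.headPos := by
  have hqp : AArrow.mk q t₂ s ρ₂ ≠ ⟨p, t₁, s, ρ₁⟩ := fun e =>
    hpq (congrArg AArrow.tailStr e).symm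
  rw [isDiagEmbedding_iff_of_injOn_tailStr (by simp [hpq])]
  simp only [Finset.forall_subtype_mem_pair, if_neg hqp, Bool.forall_bool, if_true,
    AArrow.ep, GArrow.ep, lt_irrefl, hps, hqs, hps.symm, hqs.symm, hpq, hpq.symm, hρ,
    not_lt_of_gt hρ, iff_self, true_iff, false_iff, not_lt, true_imp_iff, false_imp_iff,
    and_true, true_and, and_assoc, and_iff_left_of_imp le_of_lt]

lemma pairing_pair {p q s : Fin n} (hpq : p ≠ q) (hps : p ≠ s) (hqs : q ≠ s)
    {t₁ t₂ ρ₁ ρ₂ : ℚ} (hρ : ρ₁ < ρ₂) :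
    pairing {⟨p, t₁, s, ρ₁⟩, ⟨q, t₂, s, ρ₂⟩} G =
      ∑ g ∈ G.arrows, ∑ h ∈ G.arrows,
        if (g.tailStr = p ∧ g.headStr = s) ∧ (h.tailStr = q ∧ h.headStr = s) ∧
          g.headPos < h.headPos then g.sign * h.sign else 0 := by
  have hab : AArrow.mk p t₁ s ρ₁ ≠ ⟨q, t₂, s, ρ₂⟩ := fun e =>
    hpq (congrArg AArrow.tailStr e)
  rw [pairing, ← (Finset.pairArrowEquiv hab).symm.sum_comp, Fintype.sum_prod_type,
    ← Finset.sum_coe_sort G.arrows]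
  refine Fintype.sum_congr _ _ fun g => ?_
  rw [← Finset.sum_coe_sort G.arrows]
  refine Fintype.sum_congr _ _ fun h => ?_
  exact if_congr (isDiagEmbedding_pair_iff hpq hps hqs hρ g h)
    (Finset.prod_pairArrowEquiv_symm hab (fun y => y.1.sign) (g, h)) rfl

end

/-- **Interleaving identity for pairings.**  Let `p`, `q`, `s` be pairwise
distinct strings.  Let `A` be the arrow diagram with a single arrow from `p` to
`s`, `B` the one with a single arrow from `q` to `s`, and let `D₁`, `D₂` be the
two arrow diagrams each consisting of one arrow from `p` to `s` and one arrow
from `q` to `s`, distinguished by the two possible linear orders of the two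
arrow heads along string `s`.  Then `⟨D₁,G⟩ + ⟨D₂,G⟩ = ⟨A,G⟩ · ⟨B,G⟩`. -/
theorem interleaving_pairing_identity {n : ℕ} (G : GaussDiagram n)
    (p q s : Fin n) (hpq : p ≠ q) (hps : p ≠ s) (hqs : q ≠ s) :
    pairing {AArrow.mk p 0 s 0, AArrow.mk q 0 s 1} G
        + pairing {AArrow.mk p 0 s 1, AArrow.mk q 0 s 0} G
      = pairing {AArrow.mk p 0 s 0} G * pairing {AArrow.mk q 0 s 0} G := by
  have swapped : pairing {AArrow.mk p 0 s 1, AArrow.mk q 0 s 0} G =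
      ∑ g ∈ G.arrows, ∑ h ∈ G.arrows,
        if (h.tailStr = q ∧ h.headStr = s) ∧ (g.tailStr = p ∧ g.headStr = s) ∧
          h.headPos < g.headPos then h.sign * g.sign else 0 := by
    rw [Finset.pair_comm, pairing_pair hpq.symm hqs hps zero_lt_one, Finset.sum_comm]
  rw [swapped, pairing_pair hpq hps hqs zero_lt_one, pairing_singleton hps, pairing_singleton hqs,
    Finset.sum_mul_sum, ← Finset.sum_add_distrib]
  refine Finset.sum_congr rfl fun g hg => ?_
  rw [← Finset.sum_add_distrib]
  refine Finset.sum_congr rfl fun h hh => ?_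
  by_cases hP : g.tailStr = p ∧ g.headStr = s
  · by_cases hQ : h.tailStr = q ∧ h.headStr = s
    · have hgh : g ≠ h := fun e => hpq (hP.1.symm.trans (e ▸ hQ.1))
      rcases (G.headPos_ne hg hh hgh (hP.2.trans hQ.2.symm)).lt_or_gt with hlt | hlt
      · simp [hP, hQ, hlt, hlt.not_gt]
      · simp [hP, hQ, hlt, hlt.not_gt, mul_comm]
    · simp [hQ]
  · simp [hP]
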